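/- arXiv:2406.06481 — 8 statements merged into one kernel-verified Lean document; each statement's English description precedes it below -/
import Mathlib

section
/- Suppose κ ≥ 1 and κ⁻¹‖v‖₂² ≤ vᵀΩv ≤ κ‖v‖₂² for all v ∈ ℝᵖ. Then for every index j, the population nodewise regression coefficient vector satisfies ‖α*_j‖₂ = ‖(Σ_{∖j,∖j})⁻¹ Σ_{∖j,j}‖₂ ≤ √(κ² − 1). -/
/-
Let `α = α*_j` and let `u` be `1` at `j` and `-α` elsewhere. The normal equations
`Σ_{∖j,∖j} α = Σ_{∖j,j}` say exactly that `Σ u = c e_j` with `c = (Σ u)_j`, so `u = Ω (c e_j)`.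
The lower bound `Ω ≥ κ⁻¹` applied to `c e_j` gives `c² ≤ κ c`, i.e. `c ≤ κ`; the upper bound
`Ω ≤ κ` implies `Ω² ≤ κ Ω`, whence `1 + ‖α‖² = ‖u‖² ≤ κ c ≤ κ²`.
-/

open Matrix

/-- The principal submatrix of `S` obtained by deleting row and column `j`. -/
def delSub {p : ℕ} (S : Matrix (Fin p) (Fin p) ℝ) (j : Fin p) :
    Matrix {k : Fin p // k ≠ j} {k : Fin p // k ≠ j} ℝ :=
  fun k l => S k.1 l.1

/-- Column `j` of `S` with its `j`-th entry deleted. -/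
def delCol {p : ℕ} (S : Matrix (Fin p) (Fin p) ℝ) (j : Fin p) :
    {k : Fin p // k ≠ j} → ℝ :=
  fun k => S k.1 j

/-- The population nodewise regression coefficient vector `α*_j = (Σ_{∖j,∖j})⁻¹ Σ_{∖j,j}`. -/
noncomputable def alphaStar {p : ℕ} (S : Matrix (Fin p) (Fin p) ℝ) (j : Fin p) :
    {k : Fin p // k ≠ j} → ℝ :=
  (delSub S j)⁻¹ *ᵥ delCol S j

lemma dotProduct_mulVec_self_le_mul_of_le {n : Type*} [Fintype n] {Ω : Matrix n n ℝ}
    (hΩ : Ω.PosSemidef) {κ : ℝ} (hκ : 0 < κ) (hle : ∀ v, v ⬝ᵥ (Ω *ᵥ v) ≤ κ * (v ⬝ᵥ v)) (x : n → ℝ) :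
    (Ω *ᵥ x) ⬝ᵥ (Ω *ᵥ x) ≤ κ * (x ⬝ᵥ (Ω *ᵥ x)) := by
  set y := Ω *ᵥ x
  have hsymm : ∀ a b : n → ℝ, a ⬝ᵥ (Ω *ᵥ b) = b ⬝ᵥ (Ω *ᵥ a) := fun a b => by
    have hT : Ωᵀ = Ω := (isHermitian_iff_isSymm.mp hΩ.1).eq
    rw [dotProduct_mulVec, ← mulVec_transpose, hT, dotProduct_comm]
  -- Expand `0 ≤ (κ x - y)ᵀ Ω (κ x - y)` and bound `yᵀ Ω y` by `κ ‖y‖²`.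
  have hnonneg := hΩ.dotProduct_mulVec_nonneg (κ • x - y)
  simp only [star_trivial, mulVec_sub, mulVec_smul, dotProduct_sub, sub_dotProduct,
    dotProduct_smul, smul_dotProduct, smul_eq_mul, hsymm x y] at hnonneg
  nlinarith [hle y]

lemma delSub_posDef {p : ℕ} {S : Matrix (Fin p) (Fin p) ℝ} (hS : S.PosDef) (j : Fin p) :
    (delSub S j).PosDef :=
  hS.submatrix Subtype.val_injective

section Nodewise

variable {p : ℕ} (S : Matrix (Fin p) (Fin p) ℝ) (j : Fin p)

lemma delSub_mulVec_alphaStar (h : IsUnit (delSub S j).det) :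
    delSub S j *ᵥ alphaStar S j = delCol S j := by
  rw [alphaStar, mulVec_mulVec, mul_nonsing_inv _ h, one_mulVec]

/-- The coefficients of the nodewise regression residual `X_j - X_{∖j} α*_j`. -/
noncomputable def residualCoeffs : Fin p → ℝ :=
  fun i => if h : i = j then 1 else -alphaStar S j ⟨i, h⟩

@[simp]
lemma residualCoeffs_self : residualCoeffs S j j = 1 := by
  simp [residualCoeffs]

@[simp]
lemma residualCoeffs_of_ne (k : {k : Fin p // k ≠ j}) :
    residualCoeffs S j k = -alphaStar S j k := by
  simp [residualCoeffs, k.2]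

lemma dotProduct_self_residualCoeffs :
    residualCoeffs S j ⬝ᵥ residualCoeffs S j = 1 + alphaStar S j ⬝ᵥ alphaStar S j := by
  rw [dotProduct, Fintype.sum_eq_add_sum_subtype_ne _ j]
  simp [dotProduct]

lemma mulVec_residualCoeffs (h : IsUnit (delSub S j).det) :
    S *ᵥ residualCoeffs S j = Pi.single j ((S *ᵥ residualCoeffs S j) j) := by
  ext i
  by_cases hij : i = j
  · subst hij
    simp
  · have hnormal := congrFun (delSub_mulVec_alphaStar S j h) ⟨i, hij⟩
    rw [Pi.single_eq_of_ne hij, mulVec, dotProduct, Fintype.sum_eq_add_sum_subtype_ne _ j]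
    simp only [mulVec, dotProduct, delSub, delCol] at hnormal
    simp [Finset.sum_neg_distrib, hnormal]

end Nodewise

theorem stmt_4_general (p : ℕ) (S : Matrix (Fin p) (Fin p) ℝ)
    (hS : S.PosDef) (κ : ℝ) (hκ : 1 ≤ κ)
    (hbound : ∀ v : Fin p → ℝ,
      κ⁻¹ * (v ⬝ᵥ v) ≤ v ⬝ᵥ (S⁻¹ *ᵥ v) ∧ v ⬝ᵥ (S⁻¹ *ᵥ v) ≤ κ * (v ⬝ᵥ v))
    (j : Fin p) :
    Real.sqrt (alphaStar S j ⬝ᵥ alphaStar S j) ≤ Real.sqrt (κ ^ 2 - 1) := by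
  set u := residualCoeffs S j
  set c := (S *ᵥ u) j
  have huj : u j = 1 := residualCoeffs_self S j
  have hκ0 : 0 < κ := by linarith
  have hSu : S *ᵥ u = Pi.single j c :=
    mulVec_residualCoeffs S j ((isUnit_iff_isUnit_det _).mp (delSub_posDef hS j).isUnit)
  have hΩ : S⁻¹ *ᵥ Pi.single j c = u := by
    rw [← hSu, mulVec_mulVec, nonsing_inv_mul _ ((isUnit_iff_isUnit_det _).mp hS.isUnit),
      one_mulVec]
  have hc : c ≤ κ := by
    have h := (hbound (Pi.single j c)).1
    rw [hΩ, dotProduct_single, single_dotProduct, Pi.single_eq_same, huj,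
      mul_one, inv_mul_le_iff₀ hκ0] at h
    nlinarith
  have hu : u ⬝ᵥ u ≤ κ * c := by
    have h := dotProduct_mulVec_self_le_mul_of_le hS.inv.posSemidef hκ0
      (fun v => (hbound v).2) (Pi.single j c)
    rwa [hΩ, single_dotProduct, huj, mul_one] at h
  rw [dotProduct_self_residualCoeffs] at hu
  apply Real.sqrt_le_sqrt
  nlinarith

/-- If `κ ≥ 1` and `κ⁻¹‖v‖₂² ≤ vᵀΩv ≤ κ‖v‖₂²` for all `v` (with `Ω = Σ⁻¹`), then for every
index `j` the population nodewise regression coefficient vector satisfies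
`‖α*_j‖₂ ≤ √(κ² − 1)`. -/
theorem stmt_4 (p : ℕ) (hp : 2 ≤ p) (S : Matrix (Fin p) (Fin p) ℝ)
    (hS : S.PosDef) (κ : ℝ) (hκ : 1 ≤ κ)
    (hbound : ∀ v : Fin p → ℝ,
      κ⁻¹ * (v ⬝ᵥ v) ≤ v ⬝ᵥ (S⁻¹ *ᵥ v) ∧ v ⬝ᵥ (S⁻¹ *ᵥ v) ≤ κ * (v ⬝ᵥ v))
    (j : Fin p) :
    Real.sqrt (alphaStar S j ⬝ᵥ alphaStar S j) ≤ Real.sqrt (κ ^ 2 - 1) :=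
  stmt_4_general p S hS κ hκ hbound j
end

section
/- Let (S, μ) be a probability space, X : S → ℝᵖ a measurable random vector, and K > 0 such that for every v ∈ ℝᵖ with ‖v‖₂ ≤ 1 the function s ↦ exp(⟨v, X(s)⟩²/K²) is integrable with ∫ exp(⟨v, X(s)⟩²/K²) dμ(s) ≤ 2. Suppose κ ≥ 1 and κ⁻¹‖v‖₂² ≤ vᵀΩv ≤ κ‖v‖₂² for all v ∈ ℝᵖ. Then for every index j, the regression residual ε_j(s) := X(s)_j − ∑_{k ≠ j} (α*_j)_k X(s)_k is sub-Gaussian with parameter κK in the sense that s ↦ exp(ε_j(s)²/(κK)²) is integrable with ∫ exp(ε_j(s)²/(κK)²) dμ(s) ≤ 2. -/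
open Matrix MeasureTheory

/-!
Write `ε_j = ⟨w, X⟩` with `w = e_j - α*_j`. The normal equations `Σ_{∖j,∖j} α*_j = Σ_{∖j,j}` say
that `Σ w = σ e_j` for a scalar `σ = ⟨w, Σ w⟩`, i.e. `w = Ω (σ e_j)`. The lower bound on `Ω` at
`σ e_j` gives `κ⁻¹ σ² ≤ σ`, so `σ ≤ κ`; Cauchy–Schwarz for the form `Ω` together with the upper
bound gives `‖Ω u‖² ≤ κ ⟨u, Ω u⟩`, hence `‖w‖² ≤ κ σ ≤ κ²`. So `w / κ` lies in the unit ball, and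
the sub-Gaussian hypothesis in the direction `w / κ` is exactly the claim.
-/

namespace Matrix.PosSemidef

variable {n : Type*} [Fintype n] {A : Matrix n n ℝ}

theorem dotProduct_mulVec_sq_le (hA : A.PosSemidef) (x y : n → ℝ) :
    (x ⬝ᵥ A *ᵥ y) ^ 2 ≤ (x ⬝ᵥ A *ᵥ x) * (y ⬝ᵥ A *ᵥ y) := by
  classical
  have hsymm : A.IsSymm := by simpa [IsHermitian, IsSymm] using hA.isHermitian
  simpa only [toBilin'_apply'] using
    (toBilin' A).apply_sq_le_of_symm
      (fun v => by simpa [toBilin'_apply'] using hA.dotProduct_mulVec_nonneg v)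
      (LinearMap.BilinForm.isSymm_iff.mp (isSymm_toBilin'_iff_isSymm.mpr hsymm)) x y

/-- A positive semidefinite `A ≤ c • 1` satisfies `A² ≤ c • A`. -/
theorem mulVec_dotProduct_mulVec_le (hA : A.PosSemidef) {c : ℝ}
    (hc : ∀ v, v ⬝ᵥ A *ᵥ v ≤ c * (v ⬝ᵥ v)) (v : n → ℝ) :
    A *ᵥ v ⬝ᵥ A *ᵥ v ≤ c * (v ⬝ᵥ A *ᵥ v) := by
  have hv : 0 ≤ v ⬝ᵥ A *ᵥ v := by simpa using hA.dotProduct_mulVec_nonneg v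
  have hu : 0 ≤ A *ᵥ v ⬝ᵥ A *ᵥ v := by simpa using dotProduct_star_self_nonneg (A *ᵥ v)
  have hcs : (A *ᵥ v ⬝ᵥ A *ᵥ v) ^ 2 ≤ c * (A *ᵥ v ⬝ᵥ A *ᵥ v) * (v ⬝ᵥ A *ᵥ v) :=
    calc _ ≤ (A *ᵥ v ⬝ᵥ A *ᵥ (A *ᵥ v)) * (v ⬝ᵥ A *ᵥ v) := hA.dotProduct_mulVec_sq_le _ v
      _ ≤ _ := mul_le_mul_of_nonneg_right (hc _) hv
  rcases hu.lt_or_eq with hu | hu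
  · nlinarith
  · rcases le_or_gt 0 c with hc0 | hc0
    · rw [← hu]; positivity
    · have hvv : 0 ≤ v ⬝ᵥ v := by simpa using dotProduct_star_self_nonneg v
      have hv0 : v ⬝ᵥ A *ᵥ v = 0 := le_antisymm (by nlinarith [hc v]) hv
      rw [← hu, hv0, mul_zero]

theorem dotProduct_self_le_sq_of_eq_mulVec_single [DecidableEq n] (hA : A.PosSemidef)
    {κ : ℝ} (hκ : 0 < κ)
    (hbound : ∀ v, κ⁻¹ * (v ⬝ᵥ v) ≤ v ⬝ᵥ A *ᵥ v ∧ v ⬝ᵥ A *ᵥ v ≤ κ * (v ⬝ᵥ v))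
    {w : n → ℝ} {j : n} {σ : ℝ} (hw : w = A *ᵥ Pi.single j σ) (hwj : w j = 1) :
    w ⬝ᵥ w ≤ κ ^ 2 := by
  have hσ : Pi.single j σ ⬝ᵥ A *ᵥ Pi.single j σ = σ := by
    rw [← hw, single_dotProduct, hwj, mul_one]
  have hσκ : σ ≤ κ := by
    have h := (hbound (Pi.single j σ)).1
    rw [hσ, single_dotProduct, Pi.single_eq_same] at h
    have hσ0 : 0 ≤ σ := le_trans (mul_nonneg (inv_nonneg.2 hκ.le) (mul_self_nonneg σ)) h
    nlinarith [mul_inv_cancel₀ hκ.ne']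
  have := hA.mulVec_dotProduct_mulVec_le (fun v => (hbound v).2) (Pi.single j σ)
  rw [← hw, single_dotProduct, hwj, mul_one] at this
  nlinarith

end Matrix.PosSemidef

section NodewiseRegression

variable {p : ℕ} (S : Matrix (Fin p) (Fin p) ℝ) (j : Fin p)

/-- The vector `e_j - α*_j`, whose inner product with `X` is the regression residual `ε_j`. -/
noncomputable def nodewiseResidual : Fin p → ℝ :=
  fun k => if h : k = j then 1 else -alphaStar S j ⟨k, h⟩

@[simp]
theorem nodewiseResidual_self : nodewiseResidual S j j = 1 := dif_pos rfl

theorem nodewiseResidual_of_ne (k : {k : Fin p // k ≠ j}) :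
    nodewiseResidual S j k = -alphaStar S j k := dif_neg k.2

theorem nodewiseResidual_dotProduct (y : Fin p → ℝ) :
    nodewiseResidual S j ⬝ᵥ y = y j - ∑ k : {k : Fin p // k ≠ j}, alphaStar S j k * y k := by
  simp [dotProduct, Fintype.sum_eq_add_sum_subtype_ne _ j, nodewiseResidual_of_ne,
    sub_eq_add_neg]

/-- The normal equations `Σ_{∖j,∖j} α*_j = Σ_{∖j,j}`. -/
theorem mulVec_nodewiseResidual_of_ne (hS : S.PosDef) {k : Fin p} (hk : k ≠ j) :
    (S *ᵥ nodewiseResidual S j) k = 0 := by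
  have hsub : (delSub S j).PosDef := hS.submatrix Subtype.val_injective
  have normal : delSub S j *ᵥ alphaStar S j = delCol S j := by
    rw [alphaStar, mulVec_mulVec, mul_nonsing_inv _ ((isUnit_iff_isUnit_det _).mp hsub.isUnit),
      one_mulVec]
  have := congrFun normal ⟨k, hk⟩
  simp only [mulVec, dotProduct, Fintype.sum_eq_add_sum_subtype_ne _ j, nodewiseResidual_self,
    nodewiseResidual_of_ne] at this ⊢
  simp only [delSub, delCol, mul_neg, Finset.sum_neg_distrib, mul_one] at this ⊢
  linarith

theorem mulVec_nodewiseResidual (hS : S.PosDef) :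
    S *ᵥ nodewiseResidual S j = Pi.single j ((S *ᵥ nodewiseResidual S j) j) := by
  ext k
  rcases eq_or_ne k j with rfl | hk
  · simp
  · simp [hk, mulVec_nodewiseResidual_of_ne S j hS hk]

end NodewiseRegression

theorem stmt_5_general (p : ℕ) (S : Matrix (Fin p) (Fin p) ℝ) (hS : S.PosDef)
    {T : Type*} [MeasurableSpace T] (μ : Measure T)
    (X : T → (Fin p → ℝ)) (K : ℝ)
    (hsubG : ∀ v : Fin p → ℝ, Real.sqrt (v ⬝ᵥ v) ≤ 1 →
      Integrable (fun s => Real.exp ((v ⬝ᵥ X s) ^ 2 / K ^ 2)) μ ∧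
        ∫ s, Real.exp ((v ⬝ᵥ X s) ^ 2 / K ^ 2) ∂μ ≤ 2)
    (κ : ℝ) (hκ : 1 ≤ κ)
    (hbound : ∀ v : Fin p → ℝ,
      κ⁻¹ * (v ⬝ᵥ v) ≤ v ⬝ᵥ (S⁻¹ *ᵥ v) ∧ v ⬝ᵥ (S⁻¹ *ᵥ v) ≤ κ * (v ⬝ᵥ v))
    (j : Fin p) :
    Integrable (fun s =>
        Real.exp ((X s j - ∑ k : {k : Fin p // k ≠ j}, alphaStar S j k * X s k.1) ^ 2 /
          (κ * K) ^ 2)) μ ∧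
      ∫ s, Real.exp ((X s j - ∑ k : {k : Fin p // k ≠ j}, alphaStar S j k * X s k.1) ^ 2 /
          (κ * K) ^ 2) ∂μ ≤ 2 := by
  have hκ0 : 0 < κ := zero_lt_one.trans_le hκ
  set w := nodewiseResidual S j
  have hw : w ⬝ᵥ w ≤ κ ^ 2 := by
    refine hS.inv.posSemidef.dotProduct_self_le_sq_of_eq_mulVec_single hκ0 hbound
      (σ := (S *ᵥ w) j) ?_ (nodewiseResidual_self S j)
    rw [← mulVec_nodewiseResidual S j hS, mulVec_mulVec,
      nonsing_inv_mul _ ((isUnit_iff_isUnit_det _).mp hS.isUnit), one_mulVec]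
  have hv : √((κ⁻¹ • w) ⬝ᵥ (κ⁻¹ • w)) ≤ 1 := by
    rw [Real.sqrt_le_one, smul_dotProduct, dotProduct_smul, smul_eq_mul, smul_eq_mul,
      ← mul_assoc, ← sq, inv_pow]
    exact inv_mul_le_one_of_le₀ hw (by positivity)
  have hres : ∀ s, (X s j - ∑ k : {k : Fin p // k ≠ j}, alphaStar S j k * X s k.1) ^ 2 /
      (κ * K) ^ 2 = ((κ⁻¹ • w) ⬝ᵥ X s) ^ 2 / K ^ 2 := fun s => by
    rw [smul_dotProduct, nodewiseResidual_dotProduct, smul_eq_mul]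
    ring
  simpa only [hres] using hsubG _ hv

/-- If `X` is a sub-Gaussian random vector (with parameter `K`) and
`κ⁻¹‖v‖₂² ≤ vᵀΩv ≤ κ‖v‖₂²` for all `v` (with `Ω = Σ⁻¹`, `κ ≥ 1`), then for every index `j`
the regression residual `ε_j = X_j − ∑_{k ≠ j} (α*_j)_k X_k` is sub-Gaussian with
parameter `κK`: `exp(ε_j²/(κK)²)` is integrable with integral at most `2`. -/
theorem stmt_5 (p : ℕ) (hp : 2 ≤ p) (S : Matrix (Fin p) (Fin p) ℝ) (hS : S.PosDef)
    {T : Type*} [MeasurableSpace T] (μ : Measure T) [IsProbabilityMeasure μ]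
    (X : T → (Fin p → ℝ)) (hX : Measurable X) (K : ℝ) (hK : 0 < K)
    (hsubG : ∀ v : Fin p → ℝ, Real.sqrt (v ⬝ᵥ v) ≤ 1 →
      Integrable (fun s => Real.exp ((v ⬝ᵥ X s) ^ 2 / K ^ 2)) μ ∧
        ∫ s, Real.exp ((v ⬝ᵥ X s) ^ 2 / K ^ 2) ∂μ ≤ 2)
    (κ : ℝ) (hκ : 1 ≤ κ)
    (hbound : ∀ v : Fin p → ℝ,
      κ⁻¹ * (v ⬝ᵥ v) ≤ v ⬝ᵥ (S⁻¹ *ᵥ v) ∧ v ⬝ᵥ (S⁻¹ *ᵥ v) ≤ κ * (v ⬝ᵥ v))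
    (j : Fin p) :
    Integrable (fun s =>
        Real.exp ((X s j - ∑ k : {k : Fin p // k ≠ j}, alphaStar S j k * X s k.1) ^ 2 /
          (κ * K) ^ 2)) μ ∧
      ∫ s, Real.exp ((X s j - ∑ k : {k : Fin p // k ≠ j}, alphaStar S j k * X s k.1) ^ 2 /
          (κ * K) ^ 2) ∂μ ≤ 2 :=
  stmt_5_general p S hS μ X K hsubG κ hκ hbound j
end

section
/- Let R be the correlation matrix of Σ, i.e. R_{kl} := Σ_{kl}/√(Σ_{kk} Σ_{ll}). If κ₁, κ₂ > 0 and κ₁⁻¹‖v‖₂² ≤ vᵀΩv ≤ κ₂‖v‖₂² for all v ∈ ℝᵖ, then (κ₁κ₂)⁻¹‖v‖₂² ≤ vᵀRv ≤ κ₁κ₂‖v‖₂² for all v ∈ ℝᵖ; in particular all eigenvalues of R lie in the interval [(κ₁κ₂)⁻¹, κ₁κ₂]. -/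
/-!
Cauchy–Schwarz turns `κ₁⁻¹ ≤ Ω ≤ κ₂` (as quadratic forms) into `κ₂⁻¹ ≤ Σ ≤ κ₁`; in particular
`κ₂⁻¹ ≤ Σₖₖ ≤ κ₁`. With `D = diag(Σₖₖ^{-1/2})` we have `R = DΣD`, so `vᵀRv = (Dv)ᵀΣ(Dv)` while
`κ₁⁻¹‖v‖² ≤ ‖Dv‖² ≤ κ₂‖v‖²`; multiplying the two sandwiches gives the bounds on `R`, and an
eigenvector turns them into bounds on the eigenvalues.
-/

open Matrix

noncomputable def corrMatrix {p : ℕ} (S : Matrix (Fin p) (Fin p) ℝ) :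
    Matrix (Fin p) (Fin p) ℝ :=
  fun k l => S k l / Real.sqrt (S k k * S l l)

namespace Matrix

variable {m n : Type*} [Fintype m] [Fintype n]

lemma dotProduct_self_nonneg_real (v : n → ℝ) : 0 ≤ v ⬝ᵥ v := by
  simpa using dotProduct_self_star_nonneg v

theorem dotProduct_mulVec_mul_dotProduct_mulVec_le {A : Matrix n n ℝ}
    (hA : ∀ x, 0 ≤ x ⬝ᵥ (A *ᵥ x)) (x y : n → ℝ) :
    (x ⬝ᵥ (A *ᵥ y)) * (y ⬝ᵥ (A *ᵥ x)) ≤ (x ⬝ᵥ (A *ᵥ x)) * (y ⬝ᵥ (A *ᵥ y)) := by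
  classical
  simpa only [toLinearMap₂'_apply'] using
    LinearMap.BilinForm.apply_mul_apply_le_of_forall_zero_le (toLinearMap₂' ℝ A)
      (fun x => by simpa only [toLinearMap₂'_apply'] using hA x) x y

theorem dotProduct_mul_dotProduct_le (x y : n → ℝ) :
    (x ⬝ᵥ y) * (y ⬝ᵥ x) ≤ (x ⬝ᵥ x) * (y ⬝ᵥ y) := by
  classical
  simpa only [one_mulVec] using
    dotProduct_mulVec_mul_dotProduct_mulVec_le (A := 1)
      (fun x => by simpa only [one_mulVec] using dotProduct_self_nonneg_real x) x y

theorem IsHermitian.mulVec_dotProduct {A : Matrix n n ℝ} (hA : A.IsHermitian) (x y : n → ℝ) :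
    (A *ᵥ x) ⬝ᵥ y = x ⬝ᵥ (A *ᵥ y) := by
  have hAT : Aᵀ = A := by simpa [conjTranspose_eq_transpose_of_trivial] using hA.eq
  rw [dotProduct_mulVec, ← mulVec_transpose, hAT]

theorem dotProduct_transpose_mul_mul_mulVec (A : Matrix m m ℝ) (B : Matrix m n ℝ) (v : n → ℝ) :
    v ⬝ᵥ ((Bᵀ * A * B) *ᵥ v) = (B *ᵥ v) ⬝ᵥ (A *ᵥ (B *ᵥ v)) := by
  rw [← mulVec_mulVec, ← mulVec_mulVec, dotProduct_mulVec, vecMul_transpose]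

section Inverse

variable [DecidableEq n] {A : Matrix n n ℝ} {a b : ℝ}

theorem dotProduct_mulVec_le_of_le_dotProduct_inv_mulVec (hA : IsUnit A.det) (ha : 0 < a)
    (h : ∀ u, a * (u ⬝ᵥ u) ≤ u ⬝ᵥ (A⁻¹ *ᵥ u)) (v : n → ℝ) :
    v ⬝ᵥ (A *ᵥ v) ≤ a⁻¹ * (v ⬝ᵥ v) := by
  set u := A *ᵥ v
  have hu : a * (u ⬝ᵥ u) ≤ v ⬝ᵥ u := by
    simpa only [u, mulVec_mulVec, nonsing_inv_mul _ hA, one_mulVec, dotProduct_comm _ v] using h u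
  have hcs := dotProduct_mul_dotProduct_le v u
  rw [dotProduct_comm u v] at hcs
  rw [le_inv_mul_iff₀ ha]
  rcases le_or_gt (v ⬝ᵥ u) 0 with hnonpos | hpos
  · nlinarith [dotProduct_self_nonneg_real v]
  · -- `a (vᵀu)² ≤ a ‖v‖² ‖u‖² ≤ ‖v‖² (vᵀu)`
    nlinarith [dotProduct_self_nonneg_real v]

theorem le_dotProduct_mulVec_of_dotProduct_inv_mulVec_le (hA : A.PosDef) (hb : 0 < b)
    (h : ∀ u, u ⬝ᵥ (A⁻¹ *ᵥ u) ≤ b * (u ⬝ᵥ u)) (v : n → ℝ) :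
    b⁻¹ * (v ⬝ᵥ v) ≤ v ⬝ᵥ (A *ᵥ v) := by
  have hdet : IsUnit A.det := hA.det_pos.ne'.isUnit
  have hAAinv (w : n → ℝ) : A *ᵥ (A⁻¹ *ᵥ w) = w := by
    rw [mulVec_mulVec, mul_nonsing_inv _ hdet, one_mulVec]
  have hAinvA (w : n → ℝ) : A⁻¹ *ᵥ (A *ᵥ w) = w := by
    rw [mulVec_mulVec, nonsing_inv_mul _ hdet, one_mulVec]
  -- Cauchy–Schwarz for the form of `A⁻¹` at `A v` and `v`: `‖v‖⁴ ≤ (vᵀ A v) (vᵀ A⁻¹ v)`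
  have hcs := dotProduct_mulVec_mul_dotProduct_mulVec_le
    (fun x => by simpa using hA.inv.posSemidef.dotProduct_mulVec_nonneg x) (A *ᵥ v) v
  simp only [hAinvA, hA.isHermitian.mulVec_dotProduct, hAAinv] at hcs
  have hA0 : 0 ≤ v ⬝ᵥ (A *ᵥ v) := by simpa using hA.posSemidef.dotProduct_mulVec_nonneg v
  rw [inv_mul_le_iff₀ hb]
  rcases (dotProduct_self_nonneg_real v).eq_or_lt with hzero | hpos
  · rw [← hzero]; positivity
  · nlinarith [mul_le_mul_of_nonneg_left (h v) hA0]

end Inverse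

/-- `a • 1 ≤ A ≤ b • 1` in the order of quadratic forms. -/
def QuadFormBetween (A : Matrix n n ℝ) (a b : ℝ) : Prop :=
  ∀ v : n → ℝ, a * (v ⬝ᵥ v) ≤ v ⬝ᵥ (A *ᵥ v) ∧ v ⬝ᵥ (A *ᵥ v) ≤ b * (v ⬝ᵥ v)

theorem quadFormBetween_diagonal [DecidableEq n] {d : n → ℝ} {a b : ℝ}
    (h : ∀ k, a ≤ d k ∧ d k ≤ b) : QuadFormBetween (diagonal d) a b := by
  intro v
  simp only [dotProduct, mulVec_diagonal, Finset.mul_sum]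
  constructor <;> refine Finset.sum_le_sum fun k _ => ?_
  · nlinarith [(h k).1, mul_self_nonneg (v k)]
  · nlinarith [(h k).2, mul_self_nonneg (v k)]

namespace QuadFormBetween

variable {A : Matrix n n ℝ} {a b : ℝ}

theorem diag_mem_Icc (h : QuadFormBetween A a b) (k : n) : A k k ∈ Set.Icc a b := by
  classical
  simpa [mulVec_single_one] using h (Pi.single k 1)

theorem of_inv [DecidableEq n] (hA : A.PosDef) (ha : 0 < a) (hb : 0 < b)
    (h : QuadFormBetween A⁻¹ a b) : QuadFormBetween A b⁻¹ a⁻¹ := fun v =>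
  ⟨le_dotProduct_mulVec_of_dotProduct_inv_mulVec_le hA hb (fun u => (h u).2) v,
    dotProduct_mulVec_le_of_le_dotProduct_inv_mulVec hA.det_pos.ne'.isUnit ha (fun u => (h u).1) v⟩

theorem transpose_mul_mul {A : Matrix m m ℝ} {B : Matrix m n ℝ} {c d : ℝ}
    (hA : QuadFormBetween A a b) (hB : QuadFormBetween (Bᵀ * B) c d) (ha : 0 ≤ a) (hb : 0 ≤ b) :
    QuadFormBetween (Bᵀ * A * B) (a * c) (b * d) := by
  intro v
  have hBv : v ⬝ᵥ ((Bᵀ * B) *ᵥ v) = (B *ᵥ v) ⬝ᵥ (B *ᵥ v) := by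
    classical
    simpa only [Matrix.mul_one, one_mulVec] using dotProduct_transpose_mul_mul_mulVec 1 B v
  rw [dotProduct_transpose_mul_mul_mulVec]
  obtain ⟨hc, hd⟩ := hB v
  obtain ⟨hlo, hhi⟩ := hA (B *ᵥ v)
  rw [hBv] at hc hd
  constructor
  · calc a * c * (v ⬝ᵥ v) = a * (c * (v ⬝ᵥ v)) := mul_assoc _ _ _
      _ ≤ a * ((B *ᵥ v) ⬝ᵥ (B *ᵥ v)) := mul_le_mul_of_nonneg_left hc ha
      _ ≤ _ := hlo
  · calc _ ≤ b * ((B *ᵥ v) ⬝ᵥ (B *ᵥ v)) := hhi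
      _ ≤ b * (d * (v ⬝ᵥ v)) := mul_le_mul_of_nonneg_left hd hb
      _ = b * d * (v ⬝ᵥ v) := (mul_assoc _ _ _).symm

theorem spectrum_subset_Icc [DecidableEq n] (h : QuadFormBetween A a b) :
    spectrum ℝ A ⊆ Set.Icc a b := by
  intro t ht
  rw [← spectrum_toLin', ← Module.End.hasEigenvalue_iff_mem_spectrum] at ht
  obtain ⟨v, hv⟩ := ht.exists_hasEigenvector
  have hAv : A *ᵥ v = t • v := by simpa using hv.apply_eq_smul
  have hvv : 0 < v ⬝ᵥ v := (dotProduct_self_nonneg_real v).lt_of_ne' (by simpa using hv.2)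
  obtain ⟨hlo, hhi⟩ := h v
  rw [hAv, dotProduct_smul, smul_eq_mul, dotProduct_comm] at hlo hhi
  exact ⟨le_of_mul_le_mul_right hlo hvv, le_of_mul_le_mul_right hhi hvv⟩

end QuadFormBetween

end Matrix

theorem corrMatrix_eq_diagonal_mul_mul_diagonal {p : ℕ} {S : Matrix (Fin p) (Fin p) ℝ}
    (hS : ∀ k, 0 ≤ S k k) :
    corrMatrix S =
      diagonal (fun k => (√(S k k))⁻¹) * S * diagonal (fun k => (√(S k k))⁻¹) := by
  ext k l
  simp only [corrMatrix, Real.sqrt_mul (hS k), mul_diagonal, diagonal_mul, div_eq_mul_inv, mul_inv]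
  ring

/-- If `κ₁⁻¹‖v‖₂² ≤ vᵀΩv ≤ κ₂‖v‖₂²` for all `v` (with `Ω = Σ⁻¹`, `κ₁, κ₂ > 0`), then the
correlation matrix `R` of `Σ` satisfies `(κ₁κ₂)⁻¹‖v‖₂² ≤ vᵀRv ≤ κ₁κ₂‖v‖₂²` for all `v`;
in particular all (real) eigenvalues of `R` lie in `[(κ₁κ₂)⁻¹, κ₁κ₂]`. -/
theorem stmt_6 (p : ℕ) (S : Matrix (Fin p) (Fin p) ℝ) (hS : S.PosDef)
    (κ₁ κ₂ : ℝ) (hκ₁ : 0 < κ₁) (hκ₂ : 0 < κ₂)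
    (hbound : ∀ v : Fin p → ℝ,
      κ₁⁻¹ * (v ⬝ᵥ v) ≤ v ⬝ᵥ (S⁻¹ *ᵥ v) ∧ v ⬝ᵥ (S⁻¹ *ᵥ v) ≤ κ₂ * (v ⬝ᵥ v)) :
    (∀ v : Fin p → ℝ,
      (κ₁ * κ₂)⁻¹ * (v ⬝ᵥ v) ≤ v ⬝ᵥ (corrMatrix S *ᵥ v) ∧
        v ⬝ᵥ (corrMatrix S *ᵥ v) ≤ (κ₁ * κ₂) * (v ⬝ᵥ v)) ∧
      ∀ t : ℝ, t ∈ spectrum ℝ (corrMatrix S) → (κ₁ * κ₂)⁻¹ ≤ t ∧ t ≤ κ₁ * κ₂ := by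
  have hSbounds : QuadFormBetween S κ₂⁻¹ κ₁ := by
    simpa only [inv_inv] using QuadFormBetween.of_inv hS (inv_pos.2 hκ₁) hκ₂ hbound
  have hD : QuadFormBetween ((diagonal fun k => (√(S k k))⁻¹)ᵀ * diagonal fun k => (√(S k k))⁻¹)
      κ₁⁻¹ κ₂ := by
    rw [diagonal_transpose, diagonal_mul_diagonal]
    refine quadFormBetween_diagonal fun k => ?_
    obtain ⟨hlo, hhi⟩ := hSbounds.diag_mem_Icc k
    rw [← mul_inv, Real.mul_self_sqrt hS.diag_pos.le]
    exact ⟨inv_anti₀ hS.diag_pos hhi, inv_le_of_inv_le₀ hκ₂ hlo⟩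
  have hR : QuadFormBetween (corrMatrix S) (κ₁ * κ₂)⁻¹ (κ₁ * κ₂) := by
    have := hSbounds.transpose_mul_mul hD (by positivity) hκ₁.le
    rwa [diagonal_transpose, ← corrMatrix_eq_diagonal_mul_mul_diagonal fun k => hS.diag_pos.le,
      ← _root_.mul_inv_rev] at this
  exact ⟨hR, fun t ht => hR.spectrum_subset_Icc ht⟩
end

section
/- Let Σ and Σ̂ be symmetric p×p real matrices and let Ω be a p×p real matrix with ΣΩ = I_p. Then for every p×p real matrix Ω̂ and all indices i, j, the following desparsification identity holds: Ω̂_{ij} − (Ω̂_{·i})ᵀ(Σ̂ Ω̂_{·j} − e_j) − Ω_{ij} = −(Ω_{·i})ᵀ(Σ̂ − Σ)(Ω_{·j}) − (Ω̂_{·j} − Ω_{·j})ᵀ(Σ̂ Ω_{·i} − e_i) − (Ω̂_{·i} − Ω_{·i})ᵀ(Σ̂ Ω̂_{·j} − e_j). -/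
open Matrix

theorem Matrix.IsSymm.dotProduct_mulVec_comm {n R : Type*} [Fintype n] [CommSemiring R]
    {A : Matrix n n R} (hA : A.IsSymm) (x y : n → R) :
    x ⬝ᵥ (A *ᵥ y) = y ⬝ᵥ (A *ᵥ x) := by
  rw [dotProduct_mulVec, ← mulVec_transpose, hA.eq, dotProduct_comm]

theorem Matrix.mulVec_col_eq_single_of_mul_eq_one {n R : Type*} [Fintype n] [DecidableEq n]
    [Semiring R] {S B : Matrix n n R} (h : S * B = 1) (j : n) :
    S *ᵥ B.col j = Pi.single j 1 := by
  rw [← B.mulVec_single_one j, mulVec_mulVec, h, one_mulVec]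

/-- In the theorem `a, b` are the columns `i, j` of `Ω`, `c, d` those of `Ω̂`, and `u, v` are
`e_i, e_j`. -/
theorem dotProduct_desparsify_decomposition {n R : Type*} [Fintype n] [CommRing R]
    {A S : Matrix n n R} (hA : A.IsSymm) {a b v : n → R} (hb : S *ᵥ b = v) (c d u : n → R) :
    d ⬝ᵥ u - c ⬝ᵥ (A *ᵥ d - v) - b ⬝ᵥ u =
      -(a ⬝ᵥ ((A - S) *ᵥ b)) - (d - b) ⬝ᵥ (A *ᵥ a - u) - (c - a) ⬝ᵥ (A *ᵥ d - v) := by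
  simp only [sub_mulVec, dotProduct_sub, sub_dotProduct, hb]
  rw [hA.dotProduct_mulVec_comm a b, hA.dotProduct_mulVec_comm d a]
  ring

theorem stmt_8_general (p : ℕ) (S Shat Om Omhat : Matrix (Fin p) (Fin p) ℝ)
    (hShat : Shat.IsSymm) (hSOm : S * Om = 1) (i j : Fin p) :
    Omhat i j - (fun k => Omhat k i) ⬝ᵥ (Shat *ᵥ (fun k => Omhat k j) - Pi.single j 1) -
        Om i j =
      -((fun k => Om k i) ⬝ᵥ ((Shat - S) *ᵥ fun k => Om k j)) -
        ((fun k => Omhat k j) - fun k => Om k j) ⬝ᵥ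
          (Shat *ᵥ (fun k => Om k i) - Pi.single i 1) -
        ((fun k => Omhat k i) - fun k => Om k i) ⬝ᵥ
          (Shat *ᵥ (fun k => Omhat k j) - Pi.single j 1) := by
  have h := dotProduct_desparsify_decomposition hShat (a := fun k => Om k i)
    (b := fun k => Om k j) (mulVec_col_eq_single_of_mul_eq_one hSOm j)
    (fun k => Omhat k i) (fun k => Omhat k j) (Pi.single i 1)
  simpa only [dotProduct_single_one] using h

/-- The desparsification identity: if `Σ` and `Σ̂` are symmetric and `ΣΩ = I`, then for any
matrix `Ω̂` and indices `i, j`,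
`Ω̂_{ij} − Ω̂_{·i}ᵀ(Σ̂ Ω̂_{·j} − e_j) − Ω_{ij}
  = −Ω_{·i}ᵀ(Σ̂ − Σ)Ω_{·j} − (Ω̂_{·j} − Ω_{·j})ᵀ(Σ̂ Ω_{·i} − e_i)
    − (Ω̂_{·i} − Ω_{·i})ᵀ(Σ̂ Ω̂_{·j} − e_j)`. -/
theorem stmt_8 (p : ℕ) (S Shat Om Omhat : Matrix (Fin p) (Fin p) ℝ)
    (hS : S.IsSymm) (hShat : Shat.IsSymm) (hSOm : S * Om = 1) (i j : Fin p) :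
    Omhat i j - (fun k => Omhat k i) ⬝ᵥ (Shat *ᵥ (fun k => Omhat k j) - Pi.single j 1) -
        Om i j =
      -((fun k => Om k i) ⬝ᵥ ((Shat - S) *ᵥ fun k => Om k j)) -
        ((fun k => Omhat k j) - fun k => Om k j) ⬝ᵥ
          (Shat *ᵥ (fun k => Om k i) - Pi.single i 1) -
        ((fun k => Omhat k i) - fun k => Om k i) ⬝ᵥ
          (Shat *ᵥ (fun k => Omhat k j) - Pi.single j 1) :=
  stmt_8_general p S Shat Om Omhat hShat hSOm i j
end

section
/- Let X be an n×p real matrix with n ≥ 1, j an index, and A ⊆ {1,…,p} with j ∉ A; write X_A for the n×|A| matrix of the columns of X indexed by A and X_{·j} for column j. Assume the Gram matrix X_AᵀX_A is invertible, set β̂ := (X_AᵀX_A)⁻¹X_AᵀX_{·j} and r := X_{·j} − X_A β̂, and assume r ≠ 0, so that σ̂² := ‖r‖₂²/n > 0. Define ω ∈ ℝᵖ by ω_j = σ̂⁻², ω_k = −σ̂⁻² β̂_k for k ∈ A, and ω_k = 0 for k ∉ A ∪ {j}, and set Σ̂ := XᵀX/n. Then (Σ̂ ω)_k = 1 if k =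 j, (Σ̂ ω)_k = 0 for k ∈ A, and (Σ̂ ω)_k = σ̂⁻² (X_{·k}ᵀ r)/n for every k ∉ A ∪ {j}. -/
/-!
By construction `X ω = σ̂⁻² r`, so `Σ̂ ω = σ̂⁻² Xᵀ r / n`. The normal equations make the residual
`r` orthogonal to every column of `X_A`, which gives the zeros on `A`; at `j` they give
`X_{·j}ᵀ r = (r + X_A β̂)ᵀ r = ‖r‖₂² = n σ̂²`.
-/

open Matrix

/-- The `n × |A|` submatrix of the columns of `X` indexed by `A`. -/
def colsIn {n p : ℕ} (X : Matrix (Fin n) (Fin p) ℝ) (A : Finset (Fin p)) :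
    Matrix (Fin n) ↥A ℝ :=
  fun r k => X r k.1

section LeastSquares

variable {m ι R : Type*} [Fintype m] [Fintype ι] [CommRing R]

theorem Matrix.transpose_mulVec_sub_mulVec_gram_inv_eq_zero [DecidableEq ι] (M : Matrix m ι R)
    (hM : IsUnit (Mᵀ * M).det) (y : m → R) :
    Mᵀ *ᵥ (y - M *ᵥ ((Mᵀ * M)⁻¹ *ᵥ (Mᵀ *ᵥ y))) = 0 := by
  rw [mulVec_sub, mulVec_mulVec, mulVec_mulVec, mul_nonsing_inv _ hM, one_mulVec, sub_self]

theorem Matrix.dotProduct_sub_mulVec_eq_self {M : Matrix m ι R} {y : m → R} {b : ι → R}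
    (h : Mᵀ *ᵥ (y - M *ᵥ b) = 0) :
    y ⬝ᵥ (y - M *ᵥ b) = (y - M *ᵥ b) ⬝ᵥ (y - M *ᵥ b) := by
  have hfit : (M *ᵥ b) ⬝ᵥ (y - M *ᵥ b) = 0 := by
    rw [dotProduct_comm, dotProduct_mulVec, ← mulVec_transpose, h, zero_dotProduct]
  rw [sub_dotProduct, hfit, sub_zero]

end LeastSquares

section Columns

variable {n p : ℕ} (X : Matrix (Fin n) (Fin p) ℝ) (A : Finset (Fin p))

theorem colsIn_mulVec (β : A → ℝ) :
    colsIn X A *ᵥ β = X *ᵥ fun k => if h : k ∈ A then β ⟨k, h⟩ else 0 := by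
  ext i
  simp only [mulVec, dotProduct, colsIn, mul_dite, mul_zero]
  rw [← Finset.sum_subset (Finset.subset_univ A) (by intro k _ hk; simp [hk]),
    ← Finset.sum_attach A]
  exact Finset.sum_congr rfl fun k _ => by simp [k.2]

theorem colsIn_transpose_mulVec_apply (v : Fin n → ℝ) (k : A) :
    ((colsIn X A)ᵀ *ᵥ v) k = (fun i => X i k) ⬝ᵥ v := rfl

theorem mulVec_eq_smul_sub_colsIn_mulVec {j : Fin p} (hj : j ∉ A) (c : ℝ) (β : A → ℝ) :
    X *ᵥ (fun k => if k = j then c else if h : k ∈ A then -c * β ⟨k, h⟩ else 0) =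
      c • ((fun i => X i j) - colsIn X A *ᵥ β) := by
  have hsplit : (fun k => if k = j then c else if h : k ∈ A then -c * β ⟨k, h⟩ else 0) =
      c • (Pi.single j 1 - fun k => if h : k ∈ A then β ⟨k, h⟩ else 0) := by
    ext k
    by_cases hk : k = j
    · subst hk; simp [hj]
    · by_cases hkA : k ∈ A <;> simp [hk, hkA]
  rw [hsplit, mulVec_smul, mulVec_sub, mulVec_single_one, colsIn_mulVec]
  rfl

end Columns

theorem stmt_9_general (n p : ℕ) (X : Matrix (Fin n) (Fin p) ℝ)
    (j : Fin p) (A : Finset (Fin p)) (hj : j ∉ A)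
    (hGram : IsUnit ((colsIn X A)ᵀ * colsIn X A).det)
    (betahat : ↥A → ℝ)
    (hbeta : betahat = ((colsIn X A)ᵀ * colsIn X A)⁻¹ *ᵥ ((colsIn X A)ᵀ *ᵥ fun r => X r j))
    (r : Fin n → ℝ) (hres : r = (fun row => X row j) - colsIn X A *ᵥ betahat)
    (hr0 : r ≠ 0)
    (σ2 : ℝ) (hσ2 : σ2 = (r ⬝ᵥ r) / (n : ℝ))
    (ω : Fin p → ℝ)
    (hω : ω = fun k =>
      if k = j then σ2⁻¹ else if h : k ∈ A then -σ2⁻¹ * betahat ⟨k, h⟩ else 0)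
    (Shat : Matrix (Fin p) (Fin p) ℝ) (hShat : Shat = (n : ℝ)⁻¹ • (Xᵀ * X)) :
    (Shat *ᵥ ω) j = 1 ∧ (∀ k ∈ A, (Shat *ᵥ ω) k = 0) ∧
      ∀ k : Fin p, k ≠ j → k ∉ A →
        (Shat *ᵥ ω) k = σ2⁻¹ * (((fun row => X row k) ⬝ᵥ r) / (n : ℝ)) := by
  have hn : (n : ℝ) ≠ 0 := by
    rintro hn
    obtain rfl : n = 0 := by exact_mod_cast hn
    exact hr0 (Subsingleton.elim _ _)
  have hnormal : (colsIn X A)ᵀ *ᵥ r = 0 := by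
    rw [hres, hbeta]; exact transpose_mulVec_sub_mulVec_gram_inv_eq_zero _ hGram _
  have hSω : ∀ k, (Shat *ᵥ ω) k = σ2⁻¹ * ((fun row => X row k) ⬝ᵥ r / n) := fun k => by
    rw [hShat, hω, smul_mulVec, ← mulVec_mulVec, mulVec_eq_smul_sub_colsIn_mulVec X A hj, ← hres,
      mulVec_smul]
    change _ = σ2⁻¹ * ((Xᵀ *ᵥ r) k / n)
    simp only [Pi.smul_apply, smul_eq_mul]
    ring
  refine ⟨?_, fun k hk => ?_, fun k _ _ => hSω k⟩
  · have hjr : (fun row => X row j) ⬝ᵥ r = r ⬝ᵥ r := by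
      rw [hres] at hnormal ⊢; exact dotProduct_sub_mulVec_eq_self hnormal
    have hrr : r ⬝ᵥ r ≠ 0 := fun h => hr0 (dotProduct_self_eq_zero.mp h)
    rw [hSω, hjr, hσ2]
    field_simp
  · rw [hSω, ← colsIn_transpose_mulVec_apply X A r ⟨k, hk⟩, hnormal, Pi.zero_apply, zero_div,
      mul_zero]

/-- The KKT-type identity for the OLS fit of column `j` of `X` on the columns in `A`:
with `β̂ = (X_AᵀX_A)⁻¹X_AᵀX_{·j}`, `r = X_{·j} − X_Aβ̂`, `σ̂² = ‖r‖₂²/n`, `ω` as defined,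
and `Σ̂ = XᵀX/n`, one has `(Σ̂ω)_j = 1`, `(Σ̂ω)_k = 0` for `k ∈ A`, and
`(Σ̂ω)_k = σ̂⁻²(X_{·k}ᵀ r)/n` otherwise. -/
theorem stmt_9 (n p : ℕ) (hn : 1 ≤ n) (X : Matrix (Fin n) (Fin p) ℝ)
    (j : Fin p) (A : Finset (Fin p)) (hj : j ∉ A)
    (hGram : IsUnit ((colsIn X A)ᵀ * colsIn X A).det)
    (betahat : ↥A → ℝ)
    (hbeta : betahat = ((colsIn X A)ᵀ * colsIn X A)⁻¹ *ᵥ ((colsIn X A)ᵀ *ᵥ fun r => X r j))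
    (r : Fin n → ℝ) (hres : r = (fun row => X row j) - colsIn X A *ᵥ betahat)
    (hr0 : r ≠ 0)
    (σ2 : ℝ) (hσ2 : σ2 = (r ⬝ᵥ r) / (n : ℝ))
    (ω : Fin p → ℝ)
    (hω : ω = fun k =>
      if k = j then σ2⁻¹ else if h : k ∈ A then -σ2⁻¹ * betahat ⟨k, h⟩ else 0)
    (Shat : Matrix (Fin p) (Fin p) ℝ) (hShat : Shat = (n : ℝ)⁻¹ • (Xᵀ * X)) :
    (Shat *ᵥ ω) j = 1 ∧ (∀ k ∈ A, (Shat *ᵥ ω) k = 0) ∧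
      ∀ k : Fin p, k ≠ j → k ∉ A →
        (Shat *ᵥ ω) k = σ2⁻¹ * (((fun row => X row k) ⬝ᵥ r) / (n : ℝ)) :=
  stmt_9_general n p X j A hj hGram betahat hbeta r hres hr0 σ2 hσ2 ω hω Shat hShat
end

section
/- Let A ⊆ {1,…,p} and j ∈ A, and suppose column j of Ω is supported in A, i.e. Ω_{kj} = 0 for every k ∉ A. Then the inverse of the principal submatrix reproduces this column: ((Σ_{AA})⁻¹)_{kj} = Ω_{kj} for every k ∈ A. -/
open Matrix

/-- The principal submatrix `S_{AA}` of `S` indexed by `A`. -/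
def subIdx {p : ℕ} (S : Matrix (Fin p) (Fin p) ℝ) (A : Finset (Fin p)) :
    Matrix ↥A ↥A ℝ :=
  fun k l => S k.1 l.1

namespace Matrix

variable {n R K : Type*} [Fintype n]

theorem submatrix_val_mulVec_of_support_subset [NonUnitalNonAssocSemiring R]
    (S : Matrix n n R) (A : Finset n) {v : n → R} (hv : ∀ k ∉ A, v k = 0) (i : A) :
    (S.submatrix Subtype.val Subtype.val *ᵥ fun l : A => v l) i = (S *ᵥ v) i := by
  simp only [mulVec, dotProduct, submatrix_apply]
  rw [Finset.sum_coe_sort A (fun l => S i l * v l)]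
  exact Finset.sum_subset (Finset.subset_univ A) fun l _ hl => by rw [hv l hl, mul_zero]

/-- The restriction to `A` of a column of `S⁻¹` supported in `A` solves `S_{AA} x = e_j`. -/
theorem inv_submatrix_val_apply_of_col_support [DecidableEq n] [CommRing K] (S : Matrix n n K)
    (hS : IsUnit S.det) (A : Finset n)
    (hSA : IsUnit (S.submatrix (Subtype.val : A → n) (Subtype.val : A → n)).det)
    {j : n} (hj : j ∈ A) (hsupp : ∀ k ∉ A, S⁻¹ k j = 0) (k : A) :
    (S.submatrix Subtype.val Subtype.val)⁻¹ k ⟨j, hj⟩ = S⁻¹ k j := by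
  set M := S.submatrix (Subtype.val : A → n) (Subtype.val : A → n)
  have hcol : M *ᵥ (fun l : A => S⁻¹ l j) = Pi.single ⟨j, hj⟩ 1 := by
    ext i
    have hcolS : (fun k => S⁻¹ k j) = S⁻¹ *ᵥ Pi.single j 1 := (mulVec_single_one _ _).symm
    rw [submatrix_val_mulVec_of_support_subset S A hsupp, hcolS, mulVec_mulVec,
      mul_nonsing_inv S hS, one_mulVec]
    simp only [Pi.single_apply, Subtype.ext_iff]
  have := congrFun (congrArg (M⁻¹ *ᵥ ·) hcol) k
  rwa [mulVec_mulVec, nonsing_inv_mul M hSA, one_mulVec, mulVec_single_one, eq_comm] at this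

end Matrix

/-- If column `j` of `Ω = Σ⁻¹` is supported in `A ∋ j`, then the inverse of the principal
submatrix `Σ_{AA}` reproduces this column: `((Σ_{AA})⁻¹)_{kj} = Ω_{kj}` for all `k ∈ A`. -/
theorem stmt_11 (p : ℕ) (S : Matrix (Fin p) (Fin p) ℝ) (hS : S.PosDef)
    (A : Finset (Fin p)) (j : Fin p) (hj : j ∈ A)
    (hsupp : ∀ k : Fin p, k ∉ A → S⁻¹ k j = 0) :
    ∀ (k : Fin p) (hk : k ∈ A), (subIdx S A)⁻¹ ⟨k, hk⟩ ⟨j, hj⟩ = S⁻¹ k j := by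
  intro k hk
  have hSA : (S.submatrix (Subtype.val : A → Fin p) Subtype.val).PosDef :=
    hS.submatrix Subtype.val_injective
  exact inv_submatrix_val_apply_of_col_support S hS.det_pos.ne'.isUnit A hSA.det_pos.ne'.isUnit
    hj hsupp ⟨k, hk⟩
end

section
/- Let A ⊆ {1,…,p}, i ∈ A, and k ∉ A. Then the i-th diagonal entry of the inverse of the principal submatrix satisfies ((Σ_{AA})⁻¹)_{ii} ≤ Ω_{ii} − Ω_{ik}²/Ω_{kk}. -/
open Matrix

/-!
For positive definite `M`, `w ⬝ M⁻¹ w` is the maximum of `2 x ⬝ w - x ⬝ M x` over all `x`,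
attained at `x = M⁻¹ w`. Take `M = Σ_{AA}` and `w = e_i`: the maximiser, extended by zero
to all of `{1, …, p}`, vanishes at `k`, so its value `((Σ_{AA})⁻¹)_{ii}` is also a value of
`2 x ⬝ w' - x ⬝ Σ x` for `w' = e_i - (Ω_{ik} / Ω_{kk}) e_k`, hence at most
`w' ⬝ Ω w' = Ω_{ii} - Ω_{ik}² / Ω_{kk}`.
-/

variable {m n : Type*} [Fintype m] [Fintype n]

theorem Function.Injective.extend_zero_dotProduct {e : m → n} (he : e.Injective)
    (x : m → ℝ) (v : n → ℝ) : Function.extend e x 0 ⬝ᵥ v = x ⬝ᵥ (v ∘ e) :=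
  (Fintype.sum_of_injective e he _ _
    (fun j hj => by simp [Function.extend_apply' _ _ _ hj])
    (fun a => by simp [he.extend_apply])).symm

theorem Function.Injective.extend_zero_dotProduct_mulVec {e : m → n} (he : e.Injective)
    (M : Matrix n n ℝ) (x : m → ℝ) :
    Function.extend e x 0 ⬝ᵥ (M *ᵥ Function.extend e x 0) =
      x ⬝ᵥ (M.submatrix e e *ᵥ x) := by
  rw [he.extend_zero_dotProduct]
  congr 1
  ext a
  simp only [Function.comp_apply, mulVec, dotProduct_comm _ (Function.extend e x 0),
    he.extend_zero_dotProduct]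
  exact dotProduct_comm _ _

variable [DecidableEq n]

theorem Matrix.PosDef.two_mul_dotProduct_sub_le {M : Matrix n n ℝ} (hM : M.PosDef)
    (x w : n → ℝ) : 2 * (x ⬝ᵥ w) - x ⬝ᵥ (M *ᵥ x) ≤ w ⬝ᵥ (M⁻¹ *ᵥ w) := by
  set v := M⁻¹ *ᵥ w
  have hMv : M *ᵥ v = w := by
    rw [mulVec_mulVec, mul_nonsing_inv _ hM.det_pos.ne'.isUnit, one_mulVec]
  have hvMx : v ⬝ᵥ (M *ᵥ x) = w ⬝ᵥ x := by
    rw [dotProduct_mulVec, ← mulVec_transpose, (isHermitian_iff_isSymm.mp hM.isHermitian).eq,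
      hMv]
  have hnonneg : 0 ≤ (x - v) ⬝ᵥ (M *ᵥ (x - v)) := by
    simpa using hM.posSemidef.dotProduct_mulVec_nonneg (x - v)
  rw [mulVec_sub, hMv, dotProduct_sub, sub_dotProduct, sub_dotProduct, hvMx,
    dotProduct_comm w x, dotProduct_comm v w] at hnonneg
  linarith

theorem Matrix.dotProduct_mulVec_inv_mulVec_single {M : Matrix n n ℝ} (hM : IsUnit M.det)
    (i : n) :
    (M⁻¹ *ᵥ Pi.single i 1) ⬝ᵥ (M *ᵥ (M⁻¹ *ᵥ Pi.single i 1)) = M⁻¹ i i := by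
  rw [mulVec_mulVec, mul_nonsing_inv _ hM, one_mulVec, dotProduct_single, mulVec_single_one,
    mul_one]
  rfl

theorem Matrix.IsSymm.dotProduct_mulVec_single_sub_smul_single {Ω : Matrix n n ℝ}
    (hΩ : Ω.IsSymm) (i k : n) :
    (Pi.single i 1 - (Ω i k / Ω k k) • Pi.single k 1) ⬝ᵥ
        (Ω *ᵥ (Pi.single i 1 - (Ω i k / Ω k k) • Pi.single k 1)) =
      Ω i i - Ω i k ^ 2 / Ω k k := by
  have hki : Ω k i = Ω i k := hΩ.apply i k
  simp only [mulVec_sub, mulVec_smul, mulVec_single_one, dotProduct_sub, sub_dotProduct,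
    dotProduct_smul, smul_dotProduct, single_dotProduct, smul_eq_mul, one_mul, col_apply, hki]
  rcases eq_or_ne (Ω k k) 0 with hkk | hkk
  · simp [hkk]
  · field_simp
    ring

/-- For `i ∈ A` and `k ∉ A`, the `i`-th diagonal entry of the inverse of the principal
submatrix satisfies `((Σ_{AA})⁻¹)_{ii} ≤ Ω_{ii} − Ω_{ik}²/Ω_{kk}` where `Ω = Σ⁻¹`. -/
theorem stmt_12 (p : ℕ) (S : Matrix (Fin p) (Fin p) ℝ) (hS : S.PosDef)
    (A : Finset (Fin p)) (i k : Fin p) (hi : i ∈ A) (hk : k ∉ A) :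
    (subIdx S A)⁻¹ ⟨i, hi⟩ ⟨i, hi⟩ ≤ S⁻¹ i i - (S⁻¹ i k) ^ 2 / S⁻¹ k k := by
  set M := subIdx S A
  have hM : M.PosDef := hS.submatrix Subtype.val_injective
  set x := M⁻¹ *ᵥ Pi.single ⟨i, hi⟩ 1
  set y := Function.extend Subtype.val x 0
  have hyi : y i = M⁻¹ ⟨i, hi⟩ ⟨i, hi⟩ := by
    refine (Subtype.val_injective.extend_apply x 0 ⟨i, hi⟩).trans ?_
    simp [x]
  have hyk : y k = 0 := by
    refine Function.extend_apply' _ _ _ ?_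
    rintro ⟨a, rfl⟩
    exact hk a.2
  have hquad : y ⬝ᵥ (S *ᵥ y) = M⁻¹ ⟨i, hi⟩ ⟨i, hi⟩ := by
    rw [Subtype.val_injective.extend_zero_dotProduct_mulVec]
    exact dotProduct_mulVec_inv_mulVec_single hM.det_pos.ne'.isUnit _
  have hbound := hS.two_mul_dotProduct_sub_le y
    (Pi.single i 1 - (S⁻¹ i k / S⁻¹ k k) • Pi.single k 1)
  have hΩ : S⁻¹.IsSymm := isHermitian_iff_isSymm.mp hS.inv.isHermitian
  rw [hΩ.dotProduct_mulVec_single_sub_smul_single, hquad, dotProduct_sub, dotProduct_smul,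
    dotProduct_single, dotProduct_single, hyi, hyk, smul_eq_mul] at hbound
  linarith
end

section
/- (Deterministic core of the comparison of asymptotic variances of the Nodewise Loreg and desparsified estimators under Gaussian data.) Let A ⊆ {1,…,p}, let i, j ∈ A with i ≠ j, and suppose column j of Ω is supported in A, i.e. Ω_{kj} = 0 for every k ∉ A. Let Θ := (Σ_{A∖{j}, A∖{j}})⁻¹ be the inverse of the principal submatrix of Σ indexed by A∖{j}. Then Θ_{ii}·Ω_{jj} + 2Ω_{ij}² ≤ Ω_{ii}Ω_{jj} + Ω_{ij}², and equality holds if and only if Ω_{ki} = 0 for every k ∉ A. -/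
open Matrix

/-!
Write `Ω = Σ⁻¹`, `B = A ∖ {j}` and `E = Bᶜ`. The Schur complement formula gives
`Θ = Ω_BB - Ω_BE Ω_EE⁻¹ Ω_EB`, so `Θ_ii = Ω_ii - wᵀ Ω_EE⁻¹ w` with `w = Ω_{E,i}`.
Since column `j` of `Ω` vanishes off `A`, the vector `e_j` is an eigenvector of `Ω_EE` with
eigenvalue `Ω_jj`, and splitting `w = v + Ω_ij e_j` (`v_j = 0`) yields
`wᵀ Ω_EE⁻¹ w = vᵀ Ω_EE⁻¹ v + Ω_ij² / Ω_jj`. Hence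
`Θ_ii Ω_jj + 2 Ω_ij² = Ω_ii Ω_jj + Ω_ij² - Ω_jj · vᵀ Ω_EE⁻¹ v`, and the last term is
nonnegative, vanishing exactly when `v = Ω_{Aᶜ,i}` is zero.
-/

namespace Matrix

theorem inv_submatrix_inv_eq_schur {K n m o : Type*} [Field K] [Fintype n] [DecidableEq n]
    [Fintype m] [DecidableEq m] [Fintype o] [DecidableEq o] (M : Matrix n n K) (e : m ⊕ o ≃ n)
    (hM : IsUnit M.det) (hD : IsUnit (M.submatrix (e ∘ Sum.inr) (e ∘ Sum.inr)).det) :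
    ((M⁻¹).submatrix (e ∘ Sum.inl) (e ∘ Sum.inl))⁻¹ =
      M.submatrix (e ∘ Sum.inl) (e ∘ Sum.inl) - M.submatrix (e ∘ Sum.inl) (e ∘ Sum.inr) *
        (M.submatrix (e ∘ Sum.inr) (e ∘ Sum.inr))⁻¹ * M.submatrix (e ∘ Sum.inr) (e ∘ Sum.inl) := by
  set A := M.submatrix (e ∘ Sum.inl) (e ∘ Sum.inl)
  set B := M.submatrix (e ∘ Sum.inl) (e ∘ Sum.inr)
  set C := M.submatrix (e ∘ Sum.inr) (e ∘ Sum.inl)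
  set D := M.submatrix (e ∘ Sum.inr) (e ∘ Sum.inr)
  have hblocks : M.submatrix e e = fromBlocks A B C D := by
    ext (k | k) (l | l) <;> rfl
  let := M.invertibleOfIsUnitDet hM
  let := D.invertibleOfIsUnitDet hD
  let : Invertible (fromBlocks A B C D) := (submatrixEquivInvertible M e e).copy _ hblocks.symm
  let := invertibleOfFromBlocks₂₂Invertible A B C D
  have h := congrArg toBlocks₁₁ (invOf_fromBlocks₂₂_eq A B C D)
  rw [toBlocks_fromBlocks₁₁, invOf_eq_nonsing_inv, ← hblocks, inv_submatrix_equiv] at h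
  rw [show (M⁻¹).submatrix (e ∘ Sum.inl) (e ∘ Sum.inl) = toBlocks₁₁ ((M⁻¹).submatrix e e) from rfl,
    h, invOf_eq_nonsing_inv, inv_inv_of_invertible, invOf_eq_nonsing_inv]

theorem PosDef.inv_submatrix_apply_self {K n : Type*} [Field K] [PartialOrder K] [StarRing K]
    [TrivialStar K] [Fintype n] [DecidableEq n] {S : Matrix n n K} (hS : S.PosDef)
    (B : Finset n) {i : n} (hi : i ∈ B) :
    (S.submatrix (Subtype.val : B → n) Subtype.val)⁻¹ ⟨i, hi⟩ ⟨i, hi⟩ =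
      S⁻¹ i i - (fun k : {x // x ∉ B} => S⁻¹ k.1 i) ⬝ᵥ
        (S⁻¹.submatrix (Subtype.val : {x // x ∉ B} → n) (Subtype.val : {x // x ∉ B} → n))⁻¹ *ᵥ
          fun k => S⁻¹ k.1 i := by
  have hΩ : S⁻¹.PosDef := hS.inv
  have hΩsymm : S⁻¹.IsSymm := isHermitian_iff_isSymm.mp hΩ.isHermitian
  have hD : (S⁻¹.submatrix (Subtype.val : {x // x ∉ B} → n) Subtype.val).PosDef :=
    hΩ.submatrix Subtype.val_injective
  have hschur := inv_submatrix_inv_eq_schur S⁻¹ (Equiv.sumCompl (· ∈ B))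
    ((isUnit_iff_isUnit_det _).mp hΩ.isUnit) ((isUnit_iff_isUnit_det _).mp hD.isUnit)
  rw [nonsing_inv_nonsing_inv S ((isUnit_iff_isUnit_det _).mp hS.isUnit)] at hschur
  refine (congrFun (congrFun hschur ⟨i, hi⟩) ⟨i, hi⟩).trans ?_
  rw [sub_apply, Matrix.mul_assoc]
  simp only [mul_apply, dotProduct, mulVec, submatrix_apply]
  exact congrArg _ (Finset.sum_congr rfl fun k _ => by rw [hΩsymm.apply]; rfl)

section ColumnSupport

variable {K E : Type*} [Field K] [Fintype E] [DecidableEq E]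

theorem inv_mulVec_single_one_of_col {D : Matrix E E K} (hdet : IsUnit D.det) {j : E}
    (hcol : ∀ k, k ≠ j → D k j = 0) :
    D⁻¹ *ᵥ Pi.single j 1 = (D j j)⁻¹ • Pi.single j 1 := by
  have hDu : D *ᵥ Pi.single j 1 = D j j • Pi.single j 1 := by
    ext k
    rw [mulVec_single_one]
    by_cases hk : k = j
    · subst hk; simp
    · simp [hk, hcol k hk]
  have hu : Pi.single j 1 = D j j • D⁻¹ *ᵥ Pi.single j 1 := by
    rw [← mulVec_smul, ← hDu, mulVec_mulVec, nonsing_inv_mul _ hdet, one_mulVec]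
  have hjj : D j j ≠ 0 := by
    intro h
    simpa [h] using congrFun hu j
  rw [hu, smul_smul, inv_mul_cancel₀ hjj, one_smul, ← hu]

theorem dotProduct_inv_mulVec_eq_update_add {D : Matrix E E K} (hD : D.IsSymm)
    (hdet : IsUnit D.det) {j : E} (hcol : ∀ k, k ≠ j → D k j = 0) (w : E → K) :
    w ⬝ᵥ D⁻¹ *ᵥ w =
      Function.update w j 0 ⬝ᵥ D⁻¹ *ᵥ Function.update w j 0 + w j ^ 2 / D j j := by
  set v := Function.update w j 0
  set u : E → K := Pi.single j 1
  have hw : w = v + w j • u := by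
    ext k
    by_cases hk : k = j
    · subst hk; simp [v, u]
    · simp [v, u, hk]
  have hinv : D⁻¹ *ᵥ u = (D j j)⁻¹ • u := inv_mulVec_single_one_of_col hdet hcol
  have hvu : v ⬝ᵥ u = 0 := by simp [v, u]
  have huu : u ⬝ᵥ u = 1 := by simp [u]
  have huv : u ⬝ᵥ D⁻¹ *ᵥ v = 0 := by
    rw [dotProduct_mulVec, ← mulVec_transpose, hD.inv.eq, hinv, smul_dotProduct, dotProduct_comm,
      hvu, smul_zero]
  conv_lhs => rw [hw]
  simp only [mulVec_add, mulVec_smul, hinv, dotProduct_add, add_dotProduct, dotProduct_smul,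
    smul_dotProduct, huv, hvu, huu]
  ring

end ColumnSupport

theorem PosDef.dotProduct_mulVec_eq_zero_iff {n R : Type*} [Fintype n] [Ring R] [PartialOrder R]
    [StarRing R] {M : Matrix n n R} (hM : M.PosDef) (x : n → R) :
    star x ⬝ᵥ M *ᵥ x = 0 ↔ x = 0 := by
  refine ⟨fun h => ?_, fun h => by simp [h]⟩
  by_contra hx
  exact (hM.dotProduct_mulVec_pos hx).ne' h

end Matrix

theorem sub_add_sq_div_mul_add_le_and_eq_iff {a c d r : ℝ} (hd : 0 < d) (hr : 0 ≤ r) :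
    (a - (r + c ^ 2 / d)) * d + 2 * c ^ 2 ≤ a * d + c ^ 2 ∧
      ((a - (r + c ^ 2 / d)) * d + 2 * c ^ 2 = a * d + c ^ 2 ↔ r = 0) := by
  have hexp : (a - (r + c ^ 2 / d)) * d + 2 * c ^ 2 = a * d + c ^ 2 - r * d := by
    field_simp
    ring
  rw [hexp, sub_le_self_iff, sub_eq_self, mul_eq_zero, or_iff_left hd.ne']
  exact ⟨mul_nonneg hr hd.le, Iff.rfl⟩

/-- Deterministic core of the comparison of asymptotic variances: for `i, j ∈ A`, `i ≠ j`,
if column `j` of `Ω = Σ⁻¹` is supported in `A`, and `Θ = (Σ_{A∖{j},A∖{j}})⁻¹`, then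
`Θ_{ii}Ω_{jj} + 2Ω_{ij}² ≤ Ω_{ii}Ω_{jj} + Ω_{ij}²`, with equality iff `Ω_{ki} = 0` for all
`k ∉ A`. -/
theorem stmt_14 (p : ℕ) (S : Matrix (Fin p) (Fin p) ℝ) (hS : S.PosDef)
    (A : Finset (Fin p)) (i j : Fin p) (hi : i ∈ A) (hj : j ∈ A) (hij : i ≠ j)
    (hsupp : ∀ k : Fin p, k ∉ A → S⁻¹ k j = 0) :
    (subIdx S (A.erase j))⁻¹ ⟨i, Finset.mem_erase.mpr ⟨hij, hi⟩⟩
          ⟨i, Finset.mem_erase.mpr ⟨hij, hi⟩⟩ * S⁻¹ j j + 2 * (S⁻¹ i j) ^ 2 ≤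
        S⁻¹ i i * S⁻¹ j j + (S⁻¹ i j) ^ 2 ∧
      ((subIdx S (A.erase j))⁻¹ ⟨i, Finset.mem_erase.mpr ⟨hij, hi⟩⟩
            ⟨i, Finset.mem_erase.mpr ⟨hij, hi⟩⟩ * S⁻¹ j j + 2 * (S⁻¹ i j) ^ 2 =
          S⁻¹ i i * S⁻¹ j j + (S⁻¹ i j) ^ 2 ↔
        ∀ k : Fin p, k ∉ A → S⁻¹ k i = 0) := by
  set Ω := S⁻¹
  have hΩ : Ω.PosDef := hS.inv
  set B := A.erase j
  set jE : {x // x ∉ B} := ⟨j, by simp [B]⟩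
  have hne_jE (k : {x // x ∉ B}) : k ≠ jE ↔ k.1 ∉ A := by
    obtain ⟨k, hk⟩ := k
    simp only [B, Finset.mem_erase, not_and_or, not_not] at hk
    rw [Ne, Subtype.ext_iff]
    exact ⟨hk.resolve_left, fun hkA h => hkA (h ▸ hj)⟩
  set D := Ω.submatrix (Subtype.val : {x // x ∉ B} → Fin p) Subtype.val
  have hD : D.PosDef := hΩ.submatrix Subtype.val_injective
  set v := Function.update (fun k : {x // x ∉ B} => Ω k i) jE 0
  have hΘ : (subIdx S B)⁻¹ ⟨i, Finset.mem_erase.mpr ⟨hij, hi⟩⟩ ⟨i, Finset.mem_erase.mpr ⟨hij, hi⟩⟩ =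
      Ω i i - (star v ⬝ᵥ D⁻¹ *ᵥ v + Ω i j ^ 2 / Ω j j) := by
    rw [show subIdx S B = S.submatrix Subtype.val Subtype.val from rfl,
      PosDef.inv_submatrix_apply_self hS, dotProduct_inv_mulVec_eq_update_add
      (isHermitian_iff_isSymm.mp hD.isHermitian) ((isUnit_iff_isUnit_det D).mp hD.isUnit)
      (fun k hk => hsupp k ((hne_jE k).mp hk)),
      (isHermitian_iff_isSymm.mp hΩ.isHermitian).apply j i]
    rfl
  have hv : v = 0 ↔ ∀ k ∉ A, Ω k i = 0 := by
    simp only [v, Function.update_eq_iff, Pi.zero_apply, true_and, hne_jE]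
    exact ⟨fun h k hk => h ⟨k, by simp [B, hk]⟩ hk, fun h k => h k⟩
  rw [hΘ, ← hv, ← hD.inv.dotProduct_mulVec_eq_zero_iff]
  exact sub_add_sq_div_mul_add_le_and_eq_iff hΩ.diag_pos
    (hD.inv.posSemidef.dotProduct_mulVec_nonneg v)
end
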